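/- arXiv:1909.12587 — 5 statements merged into one kernel-verified Lean document; each statement's English description precedes it below -/
import Mathlib

section
/- Let n ≥ 2 be an integer. For all real numbers a, b with b ≥ 0 and a ≤ b, one has |a - b|^n ≥ b^n - n b^{n-1} a + |a|^n. -/
/-!
Fix `a ≤ b` with `0 ≤ b` and induct on the exponent. Multiplying the inequality for `n + 1` by
`b - a ≥ 0` loses exactly `(n + 1) b ^ n a ^ 2 + |a| ^ (n + 1) (b - a - |a|)`, which is nonnegative:
for `a ≤ 0` the second factor is `b`, and for `0 < a ≤ b` the negative part `a ^ (n + 1) (b - 2a)`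
is at least `-a ^ (n + 2) ≥ -b ^ n a ^ 2`. The base case `n = 2` is an identity.
-/

lemma pow_tangent_step {a b : ℝ} (hb : 0 ≤ b) (hab : a ≤ b) (n : ℕ) :
    b ^ (n + 2) - (n + 2) * b ^ (n + 1) * a + |a| ^ (n + 2) ≤
      (b - a) * (b ^ (n + 1) - (n + 1) * b ^ n * a + |a| ^ (n + 1)) := by
  have loss : (b - a) * (b ^ (n + 1) - (n + 1) * b ^ n * a + |a| ^ (n + 1)) -
      (b ^ (n + 2) - (n + 2) * b ^ (n + 1) * a + |a| ^ (n + 2)) =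
      (n + 1) * b ^ n * a ^ 2 + |a| ^ (n + 1) * (b - a - |a|) := by ring
  suffices 0 ≤ (n + 1) * b ^ n * a ^ 2 + |a| ^ (n + 1) * (b - a - |a|) by linarith
  rcases le_or_gt a 0 with ha | ha
  · rw [abs_of_nonpos ha]
    exact add_nonneg (by positivity) (mul_nonneg (pow_nonneg (neg_nonneg.2 ha) _) (by linarith))
  · rw [abs_of_pos ha]
    have hpow : a ^ n * a ^ 2 ≤ b ^ n * a ^ 2 :=
      mul_le_mul_of_nonneg_right (pow_le_pow_left₀ ha.le hab n) (sq_nonneg a)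
    have hmul : a ^ (n + 1) * (a + a - b) ≤ a ^ (n + 1) * a :=
      mul_le_mul_of_nonneg_left (by linarith) (pow_nonneg ha.le _)
    have hcoef : 0 ≤ n * (b ^ n * a ^ 2) := by positivity
    linear_combination hpow + hmul + hcoef

lemma pow_tangent_le_sub_pow {a b : ℝ} (hb : 0 ≤ b) (hab : a ≤ b) (n : ℕ) :
    b ^ (n + 2) - (n + 2) * b ^ (n + 1) * a + |a| ^ (n + 2) ≤ (b - a) ^ (n + 2) := by
  induction n with
  | zero => exact le_of_eq (by rw [sq_abs]; push_cast; ring)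
  | succ n ih =>
    push_cast
    calc b ^ (n + 3) - (n + 1 + 2) * b ^ (n + 2) * a + |a| ^ (n + 3)
        ≤ (b - a) * (b ^ (n + 2) - (n + 2) * b ^ (n + 1) * a + |a| ^ (n + 2)) := by
          have step := pow_tangent_step hb hab (n + 1)
          push_cast at step
          linear_combination step
      _ ≤ (b - a) * (b - a) ^ (n + 2) := mul_le_mul_of_nonneg_left ih (by linarith)
      _ = (b - a) ^ (n + 3) := by ring

theorem stmt_1 (n : ℕ) (hn : 2 ≤ n) (a b : ℝ) (hb : 0 ≤ b) (hab : a - b ≤ 0) :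
    |a - b| ^ n ≥ b ^ n - n * b ^ (n - 1) * a + |a| ^ n := by
  obtain ⟨m, rfl⟩ : ∃ m, n = m + 2 := ⟨n - 2, by omega⟩
  rw [abs_of_nonpos hab, neg_sub, Nat.add_sub_assoc one_le_two, Nat.cast_add, Nat.cast_two]
  exact pow_tangent_le_sub_pow hb (sub_nonpos.1 hab) m
end

section
/- Let n ≥ 2 and let Φ : (0,1) → ℝ be a C¹ function with Φ ≥ 0 and Φ' ≥ 0 on (0,1). Then for any non-increasing function v ∈ C¹₀([0,1)) (i.e. v is C¹, v(t) = 0 for t near 1, and v' ≤ 0) with v ≥ 0, one has ∫₀¹ |v'(t)|^n t^{n-1} Φ(t) dt ≥ ∫₀¹ v(t)^n Φ'(t) (-ln t)^{1-n} dt. -/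
/-!
For `t ∈ (0,1)` we have `v t = ∫_t^1 |v'|`, and Hölder's inequality for the splitting
`|v'| = (|v'| s^((n-1)/n)) · s^(-(n-1)/n)`, with `∫_t^1 s⁻¹ = -log t`, gives
`v(t)^n ≤ (-log t)^(n-1) ∫_t^1 |v'(s)|^n s^(n-1) ds`.
Multiplying by `Φ'(t) ≥ 0`, integrating and exchanging the order of integration bounds the
right-hand side by `∫_0^1 |v'(s)|^n s^(n-1) (∫_0^s Φ') ds`, and `∫_0^s Φ' ≤ Φ(s)` because `Φ` is
nondecreasing and nonnegative. Everything is done for lower Lebesgue integrals; the left-hand side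
is finite since `v'` vanishes near `1` and `Φ` is bounded on `(0, c]` for `c < 1`.
-/

open MeasureTheory Set
open scoped ENNReal

theorem ENNReal.lintegral_pow_le_lintegral_mul_lintegral_inv_pow {α : Type*} [MeasurableSpace α]
    {μ : Measure α} {f w : α → ℝ≥0∞} (hf : AEMeasurable f μ) (hw : AEMeasurable w μ)
    (hw0 : ∀ᵐ x ∂μ, w x ≠ 0) (hw_top : ∀ᵐ x ∂μ, w x ≠ ∞) {n : ℕ} (hn : n ≠ 0) :
    (∫⁻ x, f x ∂μ) ^ n ≤
      (∫⁻ x, f x ^ n * w x ^ (n - 1) ∂μ) * (∫⁻ x, (w x)⁻¹ ∂μ) ^ (n - 1) := by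
  set p : ℝ := 1 / n
  set q : ℝ := (n - 1 : ℕ) / n
  have hp : p * n = 1 := by simp only [p]; field_simp
  have hq : q * n = (n - 1 : ℕ) := by simp only [q]; field_simp
  have hpq : p + q = 1 := by
    simp only [p, q]; field_simp; rw [Nat.cast_sub (by omega)]; ring
  have hpq' : p * (n - 1 : ℕ) = q := by simp only [p, q]; ring
  have hsplit : ∀ᵐ x ∂μ, f x = (f x ^ n * w x ^ (n - 1)) ^ p * (w x)⁻¹ ^ q := by
    filter_upwards [hw0, hw_top] with x hx0 hxtop
    have hwq0 : w x ^ q ≠ 0 := by positivity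
    have hwqtop : w x ^ q ≠ ∞ := ENNReal.rpow_ne_top_of_nonneg (by positivity) hxtop
    rw [ENNReal.mul_rpow_of_nonneg _ _ (by positivity), ← ENNReal.rpow_natCast,
      ← ENNReal.rpow_natCast, ← ENNReal.rpow_mul, ← ENNReal.rpow_mul, mul_comm _ p, hp,
      mul_comm _ p, hpq', ENNReal.inv_rpow, ENNReal.rpow_one, mul_assoc,
      ENNReal.mul_inv_cancel hwq0 hwqtop, mul_one]
  have hholder := ENNReal.lintegral_mul_norm_pow_le ((hf.pow_const n).mul (hw.pow_const (n - 1)))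
    hw.inv (by positivity) (by positivity) hpq
  calc (∫⁻ x, f x ∂μ) ^ n
      = (∫⁻ x, (f x ^ n * w x ^ (n - 1)) ^ p * (w x)⁻¹ ^ q ∂μ) ^ n := by
        rw [lintegral_congr_ae hsplit]
    _ ≤ ((∫⁻ x, f x ^ n * w x ^ (n - 1) ∂μ) ^ p * (∫⁻ x, (w x)⁻¹ ∂μ) ^ q) ^ n := by
        gcongr; exact hholder
    _ = _ := by
        rw [mul_pow, ← ENNReal.rpow_natCast, ← ENNReal.rpow_natCast, ← ENNReal.rpow_natCast,
          ← ENNReal.rpow_mul, ← ENNReal.rpow_mul, hp, hq, ENNReal.rpow_one]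

theorem integral_Ioo_abs_deriv_eq_sub_of_deriv_nonpos {v : ℝ → ℝ} (hv : ContDiff ℝ 1 v) {a b : ℝ}
    (hab : a ≤ b) (hv' : ∀ x ∈ Ioo a b, deriv v x ≤ 0) :
    ∫ x in Ioo a b, |deriv v x| = v a - v b := by
  rw [setIntegral_congr_fun measurableSet_Ioo fun x hx => abs_of_nonpos (hv' x hx), integral_neg,
    ← integral_Ioc_eq_integral_Ioo, ← intervalIntegral.integral_of_le hab,
    intervalIntegral.integral_deriv_eq_sub (fun x _ => (hv.differentiable one_ne_zero) x)
      ((hv.continuous_deriv le_rfl).intervalIntegrable _ _), neg_sub]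

theorem lintegral_Ioo_inv_ofReal {a b : ℝ} (ha : 0 < a) (hab : a ≤ b) :
    ∫⁻ x in Ioo a b, (ENNReal.ofReal x)⁻¹ = ENNReal.ofReal (Real.log (b / a)) := by
  have hint : IntegrableOn (fun x : ℝ => x⁻¹) (Ioo a b) :=
    ((continuousOn_inv₀.mono fun x hx => (ha.trans_le hx.1).ne').integrableOn_Icc).mono_set
      Ioo_subset_Icc_self
  rw [← integral_inv_of_pos ha (ha.trans_le hab), intervalIntegral.integral_of_le hab,
    integral_Ioc_eq_integral_Ioo, ofReal_integral_eq_lintegral_ofReal hint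
      ((ae_restrict_mem measurableSet_Ioo).mono fun x hx => inv_nonneg.2 (ha.trans hx.1).le)]
  exact setLIntegral_congr_fun measurableSet_Ioo fun x hx =>
    (ENNReal.ofReal_inv_of_pos (ha.trans hx.1)).symm

theorem ofReal_sub_pow_le_lintegral_mul_log_pow {v : ℝ → ℝ} (hv : ContDiff ℝ 1 v) {a b : ℝ}
    (ha : 0 < a) (hab : a ≤ b) (hv' : ∀ x ∈ Ioo a b, deriv v x ≤ 0) {n : ℕ} (hn : n ≠ 0) :
    ENNReal.ofReal ((v a - v b) ^ n) ≤
      (∫⁻ x in Ioo a b, ENNReal.ofReal (|deriv v x| ^ n * x ^ (n - 1))) *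
        ENNReal.ofReal (Real.log (b / a)) ^ (n - 1) := by
  have hv_eq := integral_Ioo_abs_deriv_eq_sub_of_deriv_nonpos hv hab hv'
  have hv_nonneg : 0 ≤ v a - v b :=
    hv_eq ▸ setIntegral_nonneg measurableSet_Ioo fun x _ => abs_nonneg _
  rw [ENNReal.ofReal_pow hv_nonneg, ← hv_eq, ofReal_integral_eq_lintegral_ofReal
      (((hv.continuous_deriv le_rfl).abs.integrableOn_Icc).mono_set Ioo_subset_Icc_self)
      (Filter.Eventually.of_forall fun x => abs_nonneg _), ← lintegral_Ioo_inv_ofReal ha hab]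
  convert ENNReal.lintegral_pow_le_lintegral_mul_lintegral_inv_pow
    (hv.continuous_deriv le_rfl).abs.measurable.ennreal_ofReal.aemeasurable
    ENNReal.measurable_ofReal.aemeasurable
    ((ae_restrict_mem measurableSet_Ioo).mono fun x hx =>
      ENNReal.ofReal_ne_zero_iff.2 (ha.trans hx.1))
    (by simp) hn using 2
  refine setLIntegral_congr_fun measurableSet_Ioo fun x hx => ?_
  rw [ENNReal.ofReal_mul (by positivity), ENNReal.ofReal_pow (abs_nonneg _),
    ENNReal.ofReal_pow (ha.trans hx.1).le]

theorem ofReal_pow_mul_div_neg_log_pow_le {v : ℝ → ℝ} (hv : ContDiff ℝ 1 v) {t : ℝ}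
    (ht : t ∈ Ioo 0 1) (hv1 : v 1 = 0) (hv' : ∀ x ∈ Ioo t 1, deriv v x ≤ 0) {n : ℕ} (hn : n ≠ 0)
    {c : ℝ} (hc : 0 ≤ c) :
    ENNReal.ofReal (v t ^ n * c / (-Real.log t) ^ (n - 1)) ≤
      ENNReal.ofReal c * ∫⁻ s in Ioo t 1, ENNReal.ofReal (|deriv v s| ^ n * s ^ (n - 1)) := by
  have hlog : 0 < -Real.log t := neg_pos.2 (Real.log_neg ht.1 ht.2)
  have hbound := ofReal_sub_pow_le_lintegral_mul_log_pow hv ht.1 ht.2.le hv' hn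
  rw [hv1, sub_zero, one_div, Real.log_inv] at hbound
  rw [mul_comm (v t ^ n), mul_div_assoc, ENNReal.ofReal_mul hc,
    ENNReal.ofReal_div_of_pos (pow_pos hlog _), ENNReal.ofReal_pow hlog.le]
  gcongr
  exact ENNReal.div_le_of_le_mul hbound

theorem lintegral_Ioo_mul_lintegral_Ioo_comm {f g : ℝ → ℝ≥0∞} (hf : Measurable f)
    (hg : Measurable g) (a b : ℝ) :
    ∫⁻ t in Ioo a b, f t * ∫⁻ s in Ioo t b, g s = ∫⁻ s in Ioo a b, g s * ∫⁻ t in Ioo a s, f t := by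
  set K : ℝ × ℝ → ℝ≥0∞ := {p | p.1 < p.2}.indicator fun p => f p.1 * g p.2
  have hK : Measurable K :=
    ((hf.comp measurable_fst).mul (hg.comp measurable_snd)).indicator
      (measurableSet_lt measurable_fst measurable_snd)
  have hK_left : ∀ t s, K (t, s) = f t * (Ioi t).indicator g s := fun t s => by
    by_cases h : t < s <;> simp [K, h, indicator]
  have hK_right : ∀ t s, K (t, s) = g s * (Iio s).indicator f t := fun t s => by
    by_cases h : t < s <;> simp [K, h, indicator, mul_comm]
  calc ∫⁻ t in Ioo a b, f t * ∫⁻ s in Ioo t b, g s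
      = ∫⁻ t in Ioo a b, ∫⁻ s in Ioo a b, K (t, s) := by
        refine setLIntegral_congr_fun measurableSet_Ioo fun t ht => ?_
        simp_rw [hK_left]
        rw [lintegral_const_mul _ (hg.indicator measurableSet_Ioi),
          lintegral_indicator measurableSet_Ioi, Measure.restrict_restrict measurableSet_Ioi,
          Ioi_inter_Ioo, max_eq_left ht.1.le]
    _ = ∫⁻ s in Ioo a b, ∫⁻ t in Ioo a b, K (t, s) :=
        lintegral_lintegral_swap hK.aemeasurable
    _ = ∫⁻ s in Ioo a b, g s * ∫⁻ t in Ioo a s, f t := by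
        refine setLIntegral_congr_fun measurableSet_Ioo fun s hs => ?_
        simp_rw [hK_right]
        rw [lintegral_const_mul _ (hf.indicator measurableSet_Iio),
          lintegral_indicator measurableSet_Iio, Measure.restrict_restrict measurableSet_Iio,
          Iio_inter_Ioo, min_eq_left hs.2.le]

theorem monotoneOn_Ioo_of_hasDerivAt_nonneg {f f' : ℝ → ℝ} {a b : ℝ}
    (hf : ∀ x ∈ Ioo a b, HasDerivAt f (f' x) x) (hf' : ∀ x ∈ Ioo a b, 0 ≤ f' x) :
    MonotoneOn f (Ioo a b) :=
  monotoneOn_of_hasDerivWithinAt_nonneg (convex_Ioo a b) (HasDerivAt.continuousOn hf)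
    (by simpa only [interior_Ioo] using fun x hx => (hf x hx).hasDerivWithinAt)
    (by simpa only [interior_Ioo] using hf')

theorem lintegral_ofReal_deriv_le_of_mapsTo_Icc {f f' : ℝ → ℝ} {s : Set ℝ} (hs : MeasurableSet s)
    (hf' : ∀ x ∈ s, HasDerivWithinAt f (f' x) s x) (hf : MonotoneOn f s) {m M : ℝ}
    (hfs : MapsTo f s (Icc m M)) :
    ∫⁻ x in s, ENNReal.ofReal (f' x) ≤ ENNReal.ofReal (M - m) := by
  rw [lintegral_deriv_eq_volume_image_of_monotoneOn hs hf' hf, ← Real.volume_Icc]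
  exact measure_mono hfs.image_subset

theorem lintegral_Ioo_ofReal_mul_lintegral_Ioo_le {Φ Φ' : ℝ → ℝ} {F : ℝ → ℝ≥0∞} {a b : ℝ}
    (hΦ : ∀ x ∈ Ioo a b, HasDerivAt Φ (Φ' x) x) (hΦ' : ∀ x ∈ Ioo a b, 0 ≤ Φ' x)
    (hΦ0 : ∀ x ∈ Ioo a b, 0 ≤ Φ x) (hF : Measurable F) :
    ∫⁻ t in Ioo a b, ENNReal.ofReal (Φ' t) * ∫⁻ s in Ioo t b, F s ≤
      ∫⁻ s in Ioo a b, F s * ENNReal.ofReal (Φ s) := by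
  have hmono := monotoneOn_Ioo_of_hasDerivAt_nonneg hΦ hΦ'
  have hderiv : ∀ x ∈ Ioo a b, HasDerivAt Φ (deriv Φ x) x := fun x hx =>
    (hΦ x hx).deriv ▸ hΦ x hx
  calc ∫⁻ t in Ioo a b, ENNReal.ofReal (Φ' t) * ∫⁻ s in Ioo t b, F s
      = ∫⁻ t in Ioo a b, ENNReal.ofReal (deriv Φ t) * ∫⁻ s in Ioo t b, F s :=
        setLIntegral_congr_fun measurableSet_Ioo fun t ht => by rw [(hΦ t ht).deriv]
    _ = ∫⁻ s in Ioo a b, F s * ∫⁻ t in Ioo a s, ENNReal.ofReal (deriv Φ t) :=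
        lintegral_Ioo_mul_lintegral_Ioo_comm (measurable_deriv Φ).ennreal_ofReal hF a b
    _ ≤ ∫⁻ s in Ioo a b, F s * ENNReal.ofReal (Φ s) := by
        refine setLIntegral_mono' measurableSet_Ioo fun s hs => ?_
        have hsub : Ioo a s ⊆ Ioo a b := Ioo_subset_Ioo_right hs.2.le
        gcongr
        simpa using lintegral_ofReal_deriv_le_of_mapsTo_Icc measurableSet_Ioo
          (fun x hx => (hderiv x (hsub hx)).hasDerivWithinAt) (hmono.mono hsub)
          fun x hx => ⟨hΦ0 x (hsub hx), hmono (hsub hx) hs hx.2.le⟩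

theorem integral_le_integral_of_lintegral_ofReal_le {α : Type*} [MeasurableSpace α]
    {μ : Measure α} {f g : α → ℝ} (hg : Integrable g μ) (hg0 : 0 ≤ᵐ[μ] g)
    (hfg : ∫⁻ x, ENNReal.ofReal (f x) ∂μ ≤ ∫⁻ x, ENNReal.ofReal (g x) ∂μ) :
    ∫ x, f x ∂μ ≤ ∫ x, g x ∂μ := by
  by_cases hf : Integrable f μ
  · rw [integral_eq_lintegral_pos_part_sub_lintegral_neg_part hf,
      integral_eq_lintegral_of_nonneg_ae hg0 hg.aestronglyMeasurable]
    have := ENNReal.toReal_mono hg.lintegral_lt_top.ne hfg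
    linarith [ENNReal.toReal_nonneg (a := ∫⁻ x, ENNReal.ofReal (-f x) ∂μ)]
  · rw [integral_undef hf]
    exact integral_nonneg_of_ae hg0

theorem integrableOn_Ioo_mul_of_monotoneOn {g Φ : ℝ → ℝ} {a b c : ℝ} (hg : Continuous g)
    (hc : c < b) (hgc : ∀ t ∈ Ioo c b, g t = 0) (hΦ : MonotoneOn Φ (Ioo a b))
    (hΦ0 : ∀ t ∈ Ioo a b, 0 ≤ Φ t) (hΦc : ContinuousOn Φ (Ioo a b)) :
    IntegrableOn (fun t => g t * Φ t) (Ioo a b) := by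
  rcases le_or_gt b a with hba | hab
  · simp [Ioo_eq_empty_of_le hba]
  obtain ⟨m, hm, hcm⟩ : ∃ m ∈ Ioo a b, c < m :=
    ⟨(max a c + b) / 2, ⟨by linarith [le_max_left a c], by linarith [max_lt hab hc]⟩,
      by linarith [le_max_right a c, max_lt hab hc]⟩
  obtain ⟨K, hK⟩ := isCompact_Icc.exists_bound_of_continuousOn (s := Icc a b) hg.continuousOn
  refine Integrable.of_bound
    ((hg.continuousOn.mul hΦc).aestronglyMeasurable measurableSet_Ioo) (K * Φ m) ?_
  filter_upwards [ae_restrict_mem measurableSet_Ioo] with t ht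
  have hK0 : 0 ≤ K := (norm_nonneg _).trans (hK a ⟨le_rfl, hab.le⟩)
  rcases le_or_gt t m with htm | hmt
  · rw [norm_mul, Real.norm_of_nonneg (hΦ0 t ht)]
    exact mul_le_mul (hK t (Ioo_subset_Icc_self ht)) (hΦ ht hm htm) (hΦ0 t ht) hK0
  · rw [hgc t ⟨hcm.trans hmt, ht.2⟩, zero_mul, norm_zero]
    exact mul_nonneg hK0 (hΦ0 m hm)

theorem stmt_2_general (n : ℕ) (hn : 2 ≤ n) (Φ Φ' : ℝ → ℝ)
    (hΦderiv : ∀ t ∈ Ioo (0 : ℝ) 1, HasDerivAt Φ (Φ' t) t)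
    (hΦ0 : ∀ t ∈ Ioo (0 : ℝ) 1, 0 ≤ Φ t)
    (hΦ'0 : ∀ t ∈ Ioo (0 : ℝ) 1, 0 ≤ Φ' t)
    (v : ℝ → ℝ) (hv : ContDiff ℝ 1 v)
    (hvsupp : ∃ b : ℝ, b < 1 ∧ ∀ t, b ≤ t → v t = 0)
    (hv' : ∀ t ∈ Ico (0 : ℝ) 1, deriv v t ≤ 0) :
    ∫ t in Ioo (0 : ℝ) 1, |deriv v t| ^ n * t ^ (n - 1) * Φ t ≥
      ∫ t in Ioo (0 : ℝ) 1, v t ^ n * Φ' t / (-Real.log t) ^ (n - 1) := by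
  obtain ⟨b, hb1, hvb⟩ := hvsupp
  have hn0 : n ≠ 0 := by omega
  have hg : Continuous fun s => |deriv v s| ^ n * s ^ (n - 1) :=
    ((hv.continuous_deriv le_rfl).abs.pow n).mul (continuous_pow _)
  have hg_zero : ∀ t ∈ Ioo b 1, |deriv v t| ^ n * t ^ (n - 1) = 0 := fun t ht => by
    have hv_eq : v =ᶠ[nhds t] fun _ => 0 :=
      Filter.eventually_of_mem (Ioi_mem_nhds ht.1) fun s hs => hvb s hs.le
    simp [hv_eq.deriv_eq, hn0]
  refine integral_le_integral_of_lintegral_ofReal_le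
    (integrableOn_Ioo_mul_of_monotoneOn hg hb1 hg_zero
      (monotoneOn_Ioo_of_hasDerivAt_nonneg hΦderiv hΦ'0) hΦ0 (HasDerivAt.continuousOn hΦderiv))
    ((ae_restrict_mem measurableSet_Ioo).mono fun t ht => by
      have := hΦ0 t ht; have := ht.1.le; positivity) ?_
  calc ∫⁻ t in Ioo (0 : ℝ) 1, ENNReal.ofReal (v t ^ n * Φ' t / (-Real.log t) ^ (n - 1))
      ≤ ∫⁻ t in Ioo (0 : ℝ) 1, ENNReal.ofReal (Φ' t) *
          ∫⁻ s in Ioo t 1, ENNReal.ofReal (|deriv v s| ^ n * s ^ (n - 1)) :=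
        setLIntegral_mono' measurableSet_Ioo fun t ht =>
          ofReal_pow_mul_div_neg_log_pow_le hv ht (hvb 1 hb1.le)
            (fun x hx => hv' x ⟨(ht.1.trans hx.1).le, hx.2⟩) hn0 (hΦ'0 t ht)
    _ ≤ ∫⁻ s in Ioo (0 : ℝ) 1, ENNReal.ofReal (|deriv v s| ^ n * s ^ (n - 1)) *
          ENNReal.ofReal (Φ s) :=
        lintegral_Ioo_ofReal_mul_lintegral_Ioo_le hΦderiv hΦ'0 hΦ0 hg.measurable.ennreal_ofReal
    _ = ∫⁻ s in Ioo (0 : ℝ) 1, ENNReal.ofReal (|deriv v s| ^ n * s ^ (n - 1) * Φ s) :=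
        setLIntegral_congr_fun measurableSet_Ioo fun s hs =>
          (ENNReal.ofReal_mul (by have := hs.1.le; positivity)).symm

theorem stmt_2 (n : ℕ) (hn : 2 ≤ n) (Φ Φ' : ℝ → ℝ)
    (hΦderiv : ∀ t ∈ Ioo (0 : ℝ) 1, HasDerivAt Φ (Φ' t) t)
    (hΦcont : ContinuousOn Φ' (Ioo 0 1))
    (hΦ0 : ∀ t ∈ Ioo (0 : ℝ) 1, 0 ≤ Φ t)
    (hΦ'0 : ∀ t ∈ Ioo (0 : ℝ) 1, 0 ≤ Φ' t)
    (v : ℝ → ℝ) (hv : ContDiff ℝ 1 v)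
    (hvsupp : ∃ b : ℝ, b < 1 ∧ ∀ t, b ≤ t → v t = 0)
    (hv0 : ∀ t ∈ Ico (0 : ℝ) 1, 0 ≤ v t)
    (hv' : ∀ t ∈ Ico (0 : ℝ) 1, deriv v t ≤ 0) :
    ∫ t in Ioo (0 : ℝ) 1, |deriv v t| ^ n * t ^ (n - 1) * Φ t ≥
      ∫ t in Ioo (0 : ℝ) 1, v t ^ n * Φ' t / (-Real.log t) ^ (n - 1) :=
  stmt_2_general n hn Φ Φ' hΦderiv hΦ0 hΦ'0 v hv hvsupp hv'
end

section
/- Let n ≥ 2 and write v(t) = w(t)(-ln t) for t ∈ (0,1), where w is C¹ and w ≥ 0, and suppose v'(t) ≤ 0. Then |v'(t)|^n ≥ w(t)^n / t^n + n w(t)^{n-1} w'(t) (ln t) / t^{n-1} + |w'(t)|^n (-ln t)^n for all t ∈ (0,1). -/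
/-!
With `a = w(t)/t ≥ 0` and `b = w'(t)(-ln t)`, the hypothesis `v'(t) ≤ 0` reads `b ≤ a` and
`|v'(t)| = a - b`, so the claim is the elementary inequality
`a^n - n a^(n-1) b + |b|^n ≤ (a - b)^n`: the binomial expansion of `(a - b)^n` keeps its first two
terms and the remaining ones dominate `|b|^n`. It is proved by induction on `n`, multiplying by
`a - b ≥ 0` at each step.
-/

open Set

section ElementaryInequality

variable {K : Type*} [CommRing K] [LinearOrder K] [IsStrictOrderedRing K] {a b : K}

lemma abs_pow_succ_le (ha : 0 ≤ a) (hab : b ≤ a) {n : ℕ} (hn : 1 ≤ n) :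
    |b| ^ (n + 1) ≤ (a - b) * |b| ^ n + n * a ^ (n - 1) * b ^ 2 := by
  rcases le_or_gt 0 b with hb | hb
  · calc |b| ^ (n + 1) = b ^ (n - 1) * b ^ 2 := by
          rw [abs_of_nonneg hb, ← pow_add]; congr 1; omega
      _ ≤ a ^ (n - 1) * b ^ 2 := by gcongr
      _ ≤ n * a ^ (n - 1) * b ^ 2 := by
          rw [mul_assoc]; exact le_mul_of_one_le_left (by positivity) (by exact_mod_cast hn)
      _ ≤ (a - b) * |b| ^ n + n * a ^ (n - 1) * b ^ 2 :=
          le_add_of_nonneg_left (mul_nonneg (sub_nonneg.2 hab) (by positivity))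
  · calc |b| ^ (n + 1) = -b * |b| ^ n := by rw [pow_succ', abs_of_neg hb]
      _ ≤ (a - b) * |b| ^ n := by gcongr; linarith
      _ ≤ (a - b) * |b| ^ n + n * a ^ (n - 1) * b ^ 2 :=
          le_add_of_nonneg_right (by positivity)

lemma pow_sub_mul_add_abs_pow_le_sub_pow (ha : 0 ≤ a) (hab : b ≤ a) {n : ℕ} (hn : 2 ≤ n) :
    a ^ n - n * a ^ (n - 1) * b + |b| ^ n ≤ (a - b) ^ n := by
  induction n, hn using Nat.le_induction with
  | base => rw [sq_abs]; norm_num; linarith [sub_sq a b]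
  | succ n hn ih =>
    obtain ⟨m, rfl⟩ : ∃ m, n = m + 1 := ⟨n - 1, by omega⟩
    have hstep := abs_pow_succ_le ha hab (n := m + 1) (by omega)
    simp only [Nat.add_sub_cancel, Nat.cast_add, Nat.cast_one] at hstep ih ⊢
    calc a ^ (m + 2) - (m + 1 + 1) * a ^ (m + 1) * b + |b| ^ (m + 2)
        ≤ a ^ (m + 2) - (m + 2) * a ^ (m + 1) * b + (a - b) * |b| ^ (m + 1) +
            (m + 1) * a ^ m * b ^ 2 := by linarith
      _ = (a - b) * (a ^ (m + 1) - (m + 1) * a ^ m * b + |b| ^ (m + 1)) := by ring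
      _ ≤ (a - b) * (a - b) ^ (m + 1) := by gcongr
      _ = (a - b) ^ (m + 2) := (pow_succ' _ _).symm

end ElementaryInequality

theorem stmt_3_general (n : ℕ) (hn : 2 ≤ n) (w w' : ℝ → ℝ)
    (hw0 : ∀ t ∈ Ioo (0 : ℝ) 1, 0 ≤ w t)
    (hv' : ∀ t ∈ Ioo (0 : ℝ) 1, w' t * (-Real.log t) - w t / t ≤ 0) :
    ∀ t ∈ Ioo (0 : ℝ) 1,
      |w' t * (-Real.log t) - w t / t| ^ n ≥
        w t ^ n / t ^ n + n * w t ^ (n - 1) * w' t * Real.log t / t ^ (n - 1) +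
          |w' t| ^ n * (-Real.log t) ^ n := by
  intro t ht
  have hlog : 0 < -Real.log t := neg_pos.2 (Real.log_neg ht.1 ht.2)
  have hba : w' t * (-Real.log t) ≤ w t / t := sub_nonpos.1 (hv' t ht)
  rw [ge_iff_le, abs_sub_comm, abs_of_nonneg (sub_nonneg.2 hba)]
  calc w t ^ n / t ^ n + n * w t ^ (n - 1) * w' t * Real.log t / t ^ (n - 1) +
        |w' t| ^ n * (-Real.log t) ^ n
      = (w t / t) ^ n - n * (w t / t) ^ (n - 1) * (w' t * (-Real.log t)) +
          |w' t * (-Real.log t)| ^ n := by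
        rw [abs_mul, abs_of_pos hlog, mul_pow, div_pow, div_pow]
        ring
    _ ≤ (w t / t - w' t * (-Real.log t)) ^ n :=
        pow_sub_mul_add_abs_pow_le_sub_pow (div_nonneg (hw0 t ht) ht.1.le) hba hn

theorem stmt_3 (n : ℕ) (hn : 2 ≤ n) (w w' : ℝ → ℝ)
    (hw : ∀ t ∈ Ioo (0 : ℝ) 1, HasDerivAt w (w' t) t)
    (hwcont : ContinuousOn w' (Ioo 0 1))
    (hw0 : ∀ t ∈ Ioo (0 : ℝ) 1, 0 ≤ w t)
    (hv' : ∀ t ∈ Ioo (0 : ℝ) 1, w' t * (-Real.log t) - w t / t ≤ 0) :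
    ∀ t ∈ Ioo (0 : ℝ) 1,
      |w' t * (-Real.log t) - w t / t| ^ n ≥
        w t ^ n / t ^ n + n * w t ^ (n - 1) * w' t * Real.log t / t ^ (n - 1) +
          |w' t| ^ n * (-Real.log t) ^ n :=
  stmt_3_general n hn w w' hw0 hv'
end

section
/- (Hardy inequality in the unit ball) Let n ≥ 2 and let 𝔹ⁿ be the open unit ball in ℝⁿ. For every u ∈ C₀^∞(𝔹ⁿ), ∫_{𝔹ⁿ} |∇u|^n dx ≥ (2(n-1)/n)^n ∫_{𝔹ⁿ} |u|^n / (1 - |x|²)^n dx. -/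
open MeasureTheory Metric Finset

lemma young_aux (n : ℕ) (hn : 1 ≤ n) (p q : ℝ) (hp : 0 ≤ p) (hq : 0 ≤ q) :
    (n : ℝ) * p ^ (n - 1) * q ≤ ((n : ℝ) - 1) * p ^ n + q ^ n := by
  have h1 : (∑ k ∈ range n, q ^ k * p ^ (n - 1 - k)) * (q - p) = q ^ n - p ^ n :=
    geom_sum₂_mul q p n
  have hterm : ∀ k ∈ range n, p ^ (n - 1 - k) * p ^ k = p ^ (n - 1) := by
    intro k hk
    rw [← pow_add]
    congr 1
    have := Finset.mem_range.1 hk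
    omega
  have h2 : 0 ≤ (q - p) * ((∑ k ∈ range n, q ^ k * p ^ (n - 1 - k)) - n * p ^ (n - 1)) := by
    have hrw : (∑ k ∈ range n, q ^ k * p ^ (n - 1 - k)) - n * p ^ (n - 1)
        = ∑ k ∈ range n, p ^ (n - 1 - k) * (q ^ k - p ^ k) := by
      rw [show (n : ℝ) * p ^ (n - 1) = ∑ k ∈ range n, p ^ (n - 1 - k) * p ^ k by
        rw [Finset.sum_congr rfl hterm, Finset.sum_const, card_range, nsmul_eq_mul]]
      rw [← Finset.sum_sub_distrib]
      exact Finset.sum_congr rfl fun k _ => by ring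
    rw [hrw]
    rcases le_total p q with h | h
    · exact mul_nonneg (by linarith) (Finset.sum_nonneg fun k _ =>
        mul_nonneg (pow_nonneg hp _) (sub_nonneg.2 (pow_le_pow_left₀ hp h k)))
    · have hsum : (∑ k ∈ range n, p ^ (n - 1 - k) * (q ^ k - p ^ k)) ≤ 0 :=
        Finset.sum_nonpos fun k _ => mul_nonpos_of_nonneg_of_nonpos (pow_nonneg hp _)
          (sub_nonpos.2 (pow_le_pow_left₀ hq h k))
      nlinarith [mul_nonneg (show (0:ℝ) ≤ p - q by linarith)
        (neg_nonneg.2 hsum)]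
  have h3 : p ^ (n - 1) * p = p ^ n := by
    rw [← pow_succ]
    congr 1
    omega
  nlinarith [h1, h2, h3]

lemma poly_aux (m r : ℝ) (hm : 2 ≤ m) (hr0 : 0 ≤ r) (hr1 : r ≤ 1) :
    2 * (m - 1) / m * (1 + (m - 1) * r) ≤ m + (m - 2) * r ^ 2 := by
  have hm0 : 0 < m := by linarith
  rw [div_mul_eq_mul_div, div_le_iff₀ hm0]
  have key : 0 ≤ m ^ 2 - 2 * m + 2 - m * (m - 2) * r := by
    nlinarith [mul_nonneg (sub_nonneg.2 hr1) (mul_nonneg hm0.le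
      (show (0:ℝ) ≤ m - 2 by linarith))]
  nlinarith [mul_nonneg (sub_nonneg.2 hr1) key, mul_nonneg hr0 key]

lemma hasDerivAt_abs_pow (n : ℕ) (hn : 2 ≤ n) (t : ℝ) :
    HasDerivAt (fun s : ℝ => |s| ^ n) ((n : ℝ) * t * |t| ^ (n - 2)) t := by
  rcases lt_trichotomy t 0 with ht | rfl | ht
  · have hev : (fun s : ℝ => (-s) ^ n) =ᶠ[nhds t] fun s => |s| ^ n := by
      filter_upwards [eventually_lt_nhds ht] with s hs
      rw [abs_of_neg hs]
    have hd : HasDerivAt (fun s : ℝ => (-s) ^ n) ((n : ℝ) * t * |t| ^ (n - 2)) t := by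
      have := (hasDerivAt_pow n (-t)).comp t (hasDerivAt_neg t)
      refine HasDerivAt.congr_deriv this ?_
      rw [abs_of_neg ht]
      have h1 : (-t) ^ (n - 1) = (-t) * (-t) ^ (n - 2) := by
        rw [← pow_succ']
        congr 1
        omega
      rw [h1]; ring
    exact hd.congr_of_eventuallyEq hev.symm
  · rw [hasDerivAt_iff_isLittleO]
    rw [Asymptotics.isLittleO_iff]
    intro c hc
    have hev : ∀ᶠ s : ℝ in nhds 0, |s| ≤ min c 1 := by
      filter_upwards [Metric.ball_mem_nhds (0:ℝ) (lt_min hc one_pos)] with s hs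
      rw [Metric.mem_ball, Real.dist_eq, sub_zero] at hs
      exact hs.le
    filter_upwards [hev] with s hs
    have h1 : |s| ≤ 1 := hs.trans (min_le_right _ _)
    have h2 : |s| ≤ c := hs.trans (min_le_left _ _)
    have h3 : |s| ^ n ≤ |s| ^ 2 := pow_le_pow_of_le_one (abs_nonneg s) h1 hn
    have h4 : |s| ^ n ≤ c * |s| := by nlinarith [abs_nonneg s]
    simpa [zero_pow (show n ≠ 0 by omega), Real.norm_eq_abs,
      abs_of_nonneg (pow_nonneg (abs_nonneg s) n)] using h4
  · have hev : (fun s : ℝ => s ^ n) =ᶠ[nhds t] fun s => |s| ^ n := by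
      filter_upwards [eventually_gt_nhds ht] with s hs
      rw [abs_of_pos hs]
    have hd : HasDerivAt (fun s : ℝ => s ^ n) ((n : ℝ) * t * |t| ^ (n - 2)) t := by
      refine HasDerivAt.congr_deriv (hasDerivAt_pow n t) ?_
      rw [abs_of_pos ht]
      have h1 : t ^ (n - 1) = t * t ^ (n - 2) := by
        rw [← pow_succ']
        congr 1
        omega
      rw [h1]; ring
    exact hd.congr_of_eventuallyEq hev.symm

section
variable {n : ℕ}
local notation "E" => EuclideanSpace ℝ (Fin n)

lemma hasFDerivAt_w (x : E) :
    HasFDerivAt (fun y : E => 1 - ‖y‖ ^ 2) ((-2 : ℝ) • innerSL ℝ x) x := by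
  have h2 := ((hasFDerivAt_id x).norm_sq).const_sub 1
  refine h2.congr_fderiv ?_
  ext y
  simp [two_smul]

lemma hasFDerivAt_sfull (hn : 2 ≤ n) (a : ℝ) (x : E) (hx : 1 - ‖x‖ ^ 2 ≠ 0) :
    HasFDerivAt (fun y : E => a / (1 - ‖y‖ ^ 2) ^ (n - 1))
      ((2 * a * ((n : ℝ) - 1) / (1 - ‖x‖ ^ 2) ^ n) • innerSL ℝ x) x := by
  set W := 1 - ‖x‖ ^ 2 with hW
  have hφ : HasDerivAt (fun t : ℝ => a / t ^ (n - 1))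
      ((0 * W ^ (n - 1) - a * ((n - 1 : ℕ) * W ^ (n - 1 - 1))) / (W ^ (n - 1)) ^ 2) W :=
    (hasDerivAt_const W a).div (hasDerivAt_pow (n - 1) W) (pow_ne_zero _ hx)
  have hcomp := hφ.comp_hasFDerivAt x (hasFDerivAt_w x)
  refine hcomp.congr_fderiv ?_
  ext y
  simp only [ContinuousLinearMap.smul_apply, smul_eq_mul]
  have h1 : W ^ n = W ^ (n - 1) * W := by
    rw [← pow_succ]; congr 1; omega
  have h2 : W ^ (n - 1) = W ^ (n - 1 - 1) * W := by
    rw [← pow_succ]; congr 1; omega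
  have h3 : ((n - 1 : ℕ) : ℝ) = (n : ℝ) - 1 := by
    push_cast [Nat.cast_sub (by omega : 1 ≤ n)]; ring
  rw [h3]
  have h4 : W ^ ((n - 1) * 2) = W ^ (n - 1 - 1) * W ^ n := by
    rw [← pow_add]; congr 1; omega
  field_simp
  rw [← pow_mul, h4]
  ring

lemma sum_coord_smul_single (x : E) :
    ∑ i, x i • EuclideanSpace.single i (1:ℝ) = x := by
  have h : ∀ i : Fin n, x i • EuclideanSpace.single i (1:ℝ)
      = EuclideanSpace.single i (x i) := fun i => by
    ext j; simp [EuclideanSpace.single_apply]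
  rw [Finset.sum_congr rfl fun i _ => h i]
  ext j
  rw [show ((∑ i, EuclideanSpace.single i (x i)) : E) j
      = ∑ i, (EuclideanSpace.single (𝕜 := ℝ) i (x i) : E) j from by
    induction (univ : Finset (Fin n)) using Finset.induction with
    | empty => simp
    | insert _ _ hni ih => rw [Finset.sum_insert hni, Finset.sum_insert hni]; simp [ih]]
  simp [EuclideanSpace.single_apply]

lemma sum_sq_coord (x : E) : ∑ i, x i ^ 2 = ‖x‖ ^ 2 := by
  rw [EuclideanSpace.norm_eq, Real.sq_sqrt (by positivity)]
  simp [sq_abs]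

lemma contDiff_s (hn : 2 ≤ n) (a τ : ℝ) (hτ : τ < 1) (χ : E → ℝ) (hχ : ContDiff ℝ (⊤ : ℕ∞) χ)
    (hχ0 : ∀ y : E, τ ≤ ‖y‖ → χ y = 0) :
    ContDiff ℝ (⊤ : ℕ∞) (fun x : E => a * χ x / (1 - ‖x‖ ^ 2) ^ (n - 1)) := by
  rw [contDiff_iff_contDiffAt]
  intro x
  by_cases h : 1 - ‖x‖ ^ 2 = 0
  · have hx : τ < ‖x‖ := by
      nlinarith [norm_nonneg x]
    have hev : (fun y : E => a * χ y / (1 - ‖y‖ ^ 2) ^ (n - 1)) =ᶠ[nhds x]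
        (fun _ => 0) := by
      filter_upwards [(isOpen_lt continuous_const continuous_norm).mem_nhds hx] with y hy
      simp [hχ0 y (le_of_lt hy)]
    exact (contDiffAt_const (c := (0:ℝ))).congr_of_eventuallyEq hev
  · exact ((contDiffAt_const (c := a)).mul hχ.contDiffAt).div
      (((contDiffAt_const (c := (1:ℝ))).sub (contDiff_norm_sq (𝕜 := ℝ)).contDiffAt).pow _)
      (pow_ne_zero _ h)

lemma divg_val (hn : 2 ≤ n) (a : ℝ) (χ : E → ℝ) (x : E)
    (hx1 : ‖x‖ < 1) (hχ1 : ∀ᶠ y in nhds x, χ y = 1) :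
    ∑ i, fderiv ℝ (fun y : E => a * χ y / (1 - ‖y‖ ^ 2) ^ (n - 1) * y i) x
        (EuclideanSpace.single i 1)
      = 2 * a * ((n:ℝ) - 1) * ‖x‖ ^ 2 / (1 - ‖x‖ ^ 2) ^ n
        + n * a / (1 - ‖x‖ ^ 2) ^ (n - 1) := by
  have hW0 : 1 - ‖x‖ ^ 2 ≠ 0 := by nlinarith [norm_nonneg x]
  have hval : ∀ i : Fin n,
      fderiv ℝ (fun y : E => a * χ y / (1 - ‖y‖ ^ 2) ^ (n - 1) * y i) x
        (EuclideanSpace.single i 1)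
      = 2 * a * ((n:ℝ) - 1) * (x i) ^ 2 / (1 - ‖x‖ ^ 2) ^ n
        + a / (1 - ‖x‖ ^ 2) ^ (n - 1) := by
    intro i
    have hev : (fun y : E => a * χ y / (1 - ‖y‖ ^ 2) ^ (n - 1) * y i) =ᶠ[nhds x]
        (fun y : E => a / (1 - ‖y‖ ^ 2) ^ (n - 1) * y i) := by
      filter_upwards [hχ1] with y hy
      rw [hy, mul_one]
    have hd : HasFDerivAt (fun y : E => a / (1 - ‖y‖ ^ 2) ^ (n - 1) * y i)
        ((a / (1 - ‖x‖ ^ 2) ^ (n - 1)) • (EuclideanSpace.proj (𝕜 := ℝ) i)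
          + (x i) • ((2 * a * ((n : ℝ) - 1) / (1 - ‖x‖ ^ 2) ^ n) • innerSL ℝ x)) x :=
      (hasFDerivAt_sfull hn a x hW0).mul ((EuclideanSpace.proj (𝕜 := ℝ) i).hasFDerivAt)
    rw [hev.fderiv_eq, hd.fderiv]
    simp only [ContinuousLinearMap.add_apply, ContinuousLinearMap.coe_smul',
      Pi.smul_apply, smul_eq_mul]
    have hproj : EuclideanSpace.proj (𝕜 := ℝ) i (EuclideanSpace.single i (1:ℝ)) = 1 := by
      simp [EuclideanSpace.single_apply]
    have hinner : (innerSL ℝ) x (EuclideanSpace.single i (1:ℝ)) = x i := by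
      simp only [innerSL_apply_apply]
      rw [EuclideanSpace.inner_single_right]
      simp
    rw [hproj, hinner]
    ring
  rw [Finset.sum_congr rfl fun i _ => hval i, Finset.sum_add_distrib, Finset.sum_const,
    card_univ, Fintype.card_fin, nsmul_eq_mul]
  have : ∑ i, 2 * a * ((n:ℝ) - 1) * (x i) ^ 2 / (1 - ‖x‖ ^ 2) ^ n
      = 2 * a * ((n:ℝ) - 1) * ‖x‖ ^ 2 / (1 - ‖x‖ ^ 2) ^ n := by
    rw [← Finset.sum_div, ← Finset.mul_sum, sum_sq_coord]
  rw [this]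
  ring

end

set_option maxHeartbeats 2000000 in
theorem stmt_4 (n : ℕ) (hn : 2 ≤ n)
    (u : EuclideanSpace ℝ (Fin n) → ℝ) (hu : ContDiff ℝ (⊤ : ℕ∞) u)
    (hsupp : HasCompactSupport u) (hsupp' : tsupport u ⊆ ball 0 1) :
    ∫ x in ball (0 : EuclideanSpace ℝ (Fin n)) 1, ‖fderiv ℝ u x‖ ^ n ≥
      (2 * ((n : ℝ) - 1) / n) ^ n *
        ∫ x in ball (0 : EuclideanSpace ℝ (Fin n)) 1,
          |u x| ^ n / (1 - ‖x‖ ^ 2) ^ n := by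
  classical
  have hn2 : (2:ℝ) ≤ (n:ℝ) := by exact_mod_cast hn
  have hn0 : n ≠ 0 := by omega
  set c : ℝ := 2 * ((n : ℝ) - 1) / n with hcdef
  have hc0 : 0 < c := by
    apply div_pos (by linarith) (by linarith)
  set a : ℝ := c ^ (n - 1) with hadef
  have ha0 : 0 < a := pow_pos hc0 _
  have hacn : c ^ n = a * c := by
    rw [hadef, ← pow_succ]
    congr 1
    omega
  -- radius of the support
  obtain ⟨ρ, hρ0, hρ1, hρK⟩ : ∃ ρ : ℝ, 0 < ρ ∧ ρ < 1 ∧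
      tsupport u ⊆ closedBall (0 : EuclideanSpace ℝ (Fin n)) ρ := by
    by_cases hne : (tsupport u).Nonempty
    · obtain ⟨x₀, hx₀K, hx₀max⟩ := hsupp.exists_isMaxOn hne continuous_norm.continuousOn
      refine ⟨max ‖x₀‖ (1/2), lt_of_lt_of_le (by norm_num) (le_max_right _ _),
        max_lt (mem_ball_zero_iff.1 (hsupp' hx₀K)) (by norm_num), fun x hx => ?_⟩
      exact mem_closedBall_zero_iff.2 ((hx₀max hx).trans (le_max_left _ _))
    · exact ⟨1/2, by norm_num, by norm_num,
        by rw [Set.not_nonempty_iff_eq_empty.1 hne]; exact Set.empty_subset _⟩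
  set σ : ℝ := (2 * ρ + 1) / 3 with hσdef
  set τ : ℝ := (ρ + 2) / 3 with hτdef
  have hρσ : ρ < σ := by rw [hσdef]; linarith
  have hστ : σ < τ := by rw [hσdef, hτdef]; linarith
  have hτ1 : τ < 1 := by rw [hτdef]; linarith
  have hσ0 : 0 < σ := by rw [hσdef]; linarith
  have hσ1 : σ < 1 := lt_trans hστ hτ1
  -- cutoff function
  obtain ⟨χ, hχsm, hχ1, hχ0⟩ : ∃ χ : EuclideanSpace ℝ (Fin n) → ℝ,
      ContDiff ℝ (⊤ : ℕ∞) χ ∧ (∀ y, ‖y‖ ≤ σ → χ y = 1) ∧ (∀ y, τ ≤ ‖y‖ → χ y = 0) := by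
    refine ⟨(⟨σ, τ, hσ0, hστ⟩ : ContDiffBump (0 : EuclideanSpace ℝ (Fin n))), ?_, ?_, ?_⟩
    · exact ContDiffBump.contDiff _
    · intro y hy
      exact ContDiffBump.one_of_mem_closedBall _ (mem_closedBall_zero_iff.2 hy)
    · intro y hy
      exact ContDiffBump.zero_of_le_dist _ (by rwa [dist_zero_right])
  -- basic vanishing facts
  have hu0 : ∀ x, x ∉ tsupport u → u x = 0 := fun x hx => image_eq_zero_of_notMem_tsupport hx
  have hdu0 : ∀ x, x ∉ tsupport u → fderiv ℝ u x = 0 := by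
    intro x hx
    by_contra h
    exact hx (support_fderiv_subset ℝ h)
  have hKρ : ∀ x, x ∈ tsupport u → ‖x‖ ≤ ρ := fun x hx =>
    mem_closedBall_zero_iff.1 (hρK hx)
  have hKball : ∀ x, x ∈ tsupport u → ‖x‖ < 1 := fun x hx =>
    mem_ball_zero_iff.1 (hsupp' hx)
  -- derivative of |u|^n
  have hudiff : Differentiable ℝ u := hu.differentiable (by simp)
  have hv' : ∀ x, HasFDerivAt (fun y => |u y| ^ n)
      (((n:ℝ) * u x * |u x| ^ (n - 2)) • fderiv ℝ u x) x := fun x =>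
    (hasDerivAt_abs_pow n hn (u x)).comp_hasFDerivAt x (hudiff x).hasFDerivAt
  have hvd : Differentiable ℝ (fun y => |u y| ^ n) := fun x => (hv' x).differentiableAt
  have hfv : ∀ x, fderiv ℝ (fun y => |u y| ^ n) x
      = ((n:ℝ) * u x * |u x| ^ (n - 2)) • fderiv ℝ u x := fun x => (hv' x).fderiv
  -- smoothness of the vector field
  have hssm : ContDiff ℝ (⊤ : ℕ∞) (fun x : EuclideanSpace ℝ (Fin n) =>
      a * χ x / (1 - ‖x‖ ^ 2) ^ (n - 1)) := contDiff_s hn a τ hτ1 χ hχsm hχ0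
  have hgsm : ∀ i : Fin n, ContDiff ℝ (⊤ : ℕ∞) (fun x : EuclideanSpace ℝ (Fin n) =>
      a * χ x / (1 - ‖x‖ ^ 2) ^ (n - 1) * x i) := fun i =>
    hssm.mul (EuclideanSpace.proj (𝕜 := ℝ) i).contDiff
  -- continuity facts
  have hucont : Continuous u := hu.continuous
  have hvcont : Continuous (fun y => |u y| ^ n) := (hucont.abs).pow n
  have hducont : Continuous (fderiv ℝ u) := hu.continuous_fderiv (by simp)
  have hscont : Continuous (fun x : EuclideanSpace ℝ (Fin n) =>
      a * χ x / (1 - ‖x‖ ^ 2) ^ (n - 1)) := hssm.continuous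
  have hdgcont : ∀ i : Fin n, Continuous (fun x : EuclideanSpace ℝ (Fin n) =>
      fderiv ℝ (fun y : EuclideanSpace ℝ (Fin n) =>
        a * χ y / (1 - ‖y‖ ^ 2) ^ (n - 1) * y i) x (EuclideanSpace.single i 1)) := fun i =>
    ((hgsm i).continuous_fderiv (by simp)).clm_apply continuous_const
  -- continuity helper for functions vanishing outside the support
  have hconthelp : ∀ F : EuclideanSpace ℝ (Fin n) → ℝ,
      (∀ x, x ∉ tsupport u → F x = 0) → (∀ x, ‖x‖ < 1 → ContinuousAt F x) →
      Continuous F := by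
    intro F h0 hC
    rw [continuous_iff_continuousAt]
    intro x
    by_cases hx : ‖x‖ < 1
    · exact hC x hx
    · have hxK : x ∉ tsupport u := fun h => hx (hKball x h)
      have hev : F =ᶠ[nhds x] (fun _ => (0:ℝ)) := by
        filter_upwards [(isClosed_tsupport u).isOpen_compl.mem_nhds hxK] with y hy
        exact h0 y hy
      exact (continuousAt_congr hev).2 continuousAt_const
  -- integrability of the various integrands
  have hCSupp : ∀ F : EuclideanSpace ℝ (Fin n) → ℝ,
      (∀ x, x ∉ tsupport u → F x = 0) → HasCompactSupport F := fun F h0 =>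
    HasCompactSupport.intro hsupp h0
  have int1 : Integrable (fun x : EuclideanSpace ℝ (Fin n) =>
      |u x| ^ n / (1 - ‖x‖ ^ 2) ^ n) := by
    apply Continuous.integrable_of_hasCompactSupport
    · apply hconthelp
      · intro x hx
        rw [hu0 x hx, abs_zero, zero_pow hn0, zero_div]
      · intro x hx
        have hW : (1 - ‖x‖ ^ 2) ^ n ≠ 0 := pow_ne_zero _ (by nlinarith [norm_nonneg x])
        exact (hvcont.continuousAt).div
          (((continuous_const.sub (contDiff_norm_sq (𝕜 := ℝ) (n := 1)).continuous).pow n).continuousAt) hW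
    · apply hCSupp
      intro x hx
      rw [hu0 x hx, abs_zero, zero_pow hn0, zero_div]
  have int2 : Integrable (fun x : EuclideanSpace ℝ (Fin n) =>
      ‖x‖ * |u x| ^ n / (1 - ‖x‖ ^ 2) ^ n) := by
    apply Continuous.integrable_of_hasCompactSupport
    · apply hconthelp
      · intro x hx
        rw [hu0 x hx, abs_zero, zero_pow hn0, mul_zero, zero_div]
      · intro x hx
        have hW : (1 - ‖x‖ ^ 2) ^ n ≠ 0 := pow_ne_zero _ (by nlinarith [norm_nonneg x])
        exact ((continuous_norm.mul hvcont).continuousAt).div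
          (((continuous_const.sub (contDiff_norm_sq (𝕜 := ℝ) (n := 1)).continuous).pow n).continuousAt) hW
    · apply hCSupp
      intro x hx
      rw [hu0 x hx, abs_zero, zero_pow hn0, mul_zero, zero_div]
  have int3 : Integrable (fun x : EuclideanSpace ℝ (Fin n) => ‖fderiv ℝ u x‖ ^ n) := by
    apply Continuous.integrable_of_hasCompactSupport ((hducont.norm).pow n)
    apply hCSupp
    intro x hx
    show ‖fderiv ℝ u x‖ ^ n = 0
    rw [hdu0 x hx, norm_zero, zero_pow hn0]
  have int4' : ∀ i : Fin n, Integrable (fun x : EuclideanSpace ℝ (Fin n) =>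
      |u x| ^ n * fderiv ℝ (fun y : EuclideanSpace ℝ (Fin n) =>
        a * χ y / (1 - ‖y‖ ^ 2) ^ (n - 1) * y i) x (EuclideanSpace.single i 1)) := by
    intro i
    apply Continuous.integrable_of_hasCompactSupport (hvcont.mul (hdgcont i))
    apply hCSupp
    intro x hx
    show |u x| ^ n * _ = 0
    rw [hu0 x hx, abs_zero, zero_pow hn0, zero_mul]
  have hfvcont : Continuous (fun x : EuclideanSpace ℝ (Fin n) =>
      ((n:ℝ) * u x * |u x| ^ (n - 2))) :=
    (continuous_const.mul hucont).mul ((hucont.abs).pow _)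
  have int5' : ∀ i : Fin n, Integrable (fun x : EuclideanSpace ℝ (Fin n) =>
      fderiv ℝ (fun y => |u y| ^ n) x (EuclideanSpace.single i 1) *
        (a * χ x / (1 - ‖x‖ ^ 2) ^ (n - 1) * x i)) := by
    intro i
    apply Continuous.integrable_of_hasCompactSupport
    · have heq : (fun x : EuclideanSpace ℝ (Fin n) =>
          fderiv ℝ (fun y => |u y| ^ n) x (EuclideanSpace.single i 1))
          = fun x => ((n:ℝ) * u x * |u x| ^ (n - 2)) *
              (fderiv ℝ u x (EuclideanSpace.single i 1)) := by
        funext x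
        rw [hfv x]
        simp
      have hcA : Continuous (fun x : EuclideanSpace ℝ (Fin n) =>
          fderiv ℝ (fun y => |u y| ^ n) x (EuclideanSpace.single i 1)) := by
        rw [heq]
        exact hfvcont.mul (hducont.clm_apply continuous_const)
      exact hcA.mul ((hgsm i).continuous)
    · apply hCSupp
      intro x hx
      rw [hfv x, hdu0 x hx]
      simp
  have int6' : ∀ i : Fin n, Integrable (fun x : EuclideanSpace ℝ (Fin n) =>
      |u x| ^ n * (a * χ x / (1 - ‖x‖ ^ 2) ^ (n - 1) * x i)) := by
    intro i
    apply Continuous.integrable_of_hasCompactSupport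
      (hvcont.mul ((hgsm i).continuous))
    apply hCSupp
    intro x hx
    show |u x| ^ n * _ = 0
    rw [hu0 x hx, abs_zero, zero_pow hn0, zero_mul]
  have hibp : ∀ i : Fin n,
      ∫ x : EuclideanSpace ℝ (Fin n), |u x| ^ n * fderiv ℝ
          (fun y : EuclideanSpace ℝ (Fin n) =>
            a * χ y / (1 - ‖y‖ ^ 2) ^ (n - 1) * y i) x (EuclideanSpace.single i 1)
        = - ∫ x : EuclideanSpace ℝ (Fin n),
            fderiv ℝ (fun y => |u y| ^ n) x (EuclideanSpace.single i 1) *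
              (a * χ x / (1 - ‖x‖ ^ 2) ^ (n - 1) * x i) := fun i =>
    integral_mul_fderiv_eq_neg_fderiv_mul_of_integrable (int5' i) (int4' i) (int6' i) (fun x _ => hvd x)
      (fun x _ => (hgsm i).differentiable (by simp) x)
  have hptsum : ∀ x : EuclideanSpace ℝ (Fin n),
      ∑ i, fderiv ℝ (fun y => |u y| ^ n) x (EuclideanSpace.single i 1) *
          (a * χ x / (1 - ‖x‖ ^ 2) ^ (n - 1) * x i)
        = (a * χ x / (1 - ‖x‖ ^ 2) ^ (n - 1)) * fderiv ℝ (fun y => |u y| ^ n) x x := by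
    intro x
    have hL : fderiv ℝ (fun y => |u y| ^ n) x x
        = ∑ i, x i * fderiv ℝ (fun y => |u y| ^ n) x (EuclideanSpace.single i 1) := by
      rw [← congrArg (fderiv ℝ (fun y => |u y| ^ n) x) (sum_coord_smul_single x), map_sum]
      exact Finset.sum_congr rfl fun i _ => by
        rw [_root_.map_smul]
        simp
    rw [hL, Finset.mul_sum]
    exact Finset.sum_congr rfl fun i _ => by ring
  have hkey : ∫ x : EuclideanSpace ℝ (Fin n),
      |u x| ^ n * (∑ i, fderiv ℝ (fun y : EuclideanSpace ℝ (Fin n) =>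
        a * χ y / (1 - ‖y‖ ^ 2) ^ (n - 1) * y i) x (EuclideanSpace.single i 1))
      = - ∫ x : EuclideanSpace ℝ (Fin n),
          (a * χ x / (1 - ‖x‖ ^ 2) ^ (n - 1)) * fderiv ℝ (fun y => |u y| ^ n) x x := by
    have h1 : (fun x : EuclideanSpace ℝ (Fin n) =>
        |u x| ^ n * (∑ i, fderiv ℝ (fun y : EuclideanSpace ℝ (Fin n) =>
          a * χ y / (1 - ‖y‖ ^ 2) ^ (n - 1) * y i) x (EuclideanSpace.single i 1)))
        = fun x => ∑ i, |u x| ^ n * fderiv ℝ (fun y : EuclideanSpace ℝ (Fin n) =>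
          a * χ y / (1 - ‖y‖ ^ 2) ^ (n - 1) * y i) x (EuclideanSpace.single i 1) :=
      funext fun x => Finset.mul_sum _ _ _
    rw [h1, integral_finset_sum _ (fun i _ => int4' i),
      Finset.sum_congr rfl fun i _ => hibp i, Finset.sum_neg_distrib,
      ← integral_finset_sum _ (fun i _ => int5' i)]
    congr 1
    simp only [hptsum]
  -- pointwise bound P1 (divergence lower bound)
  have hP1 : ∀ x : EuclideanSpace ℝ (Fin n),
      c ^ n * (|u x| ^ n / (1 - ‖x‖ ^ 2) ^ n)
        + ((n:ℝ) - 1) * c ^ n * (‖x‖ * |u x| ^ n / (1 - ‖x‖ ^ 2) ^ n)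
      ≤ |u x| ^ n * (∑ i, fderiv ℝ (fun y : EuclideanSpace ℝ (Fin n) =>
          a * χ y / (1 - ‖y‖ ^ 2) ^ (n - 1) * y i) x (EuclideanSpace.single i 1)) := by
    intro x
    by_cases hx : x ∈ tsupport u
    · have hr1 : ‖x‖ ≤ ρ := hKρ x hx
      have hrlt : ‖x‖ < 1 := hKball x hx
      have hW : 0 < 1 - ‖x‖ ^ 2 := by nlinarith [norm_nonneg x]
      have hχev : ∀ᶠ y in nhds x, χ y = 1 := by
        filter_upwards [(isOpen_lt continuous_norm continuous_const).mem_nhds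
          (show ‖x‖ < σ by linarith)] with y hy
        exact hχ1 y hy.le
      rw [divg_val hn a χ x hrlt hχev]
      have hpoly := poly_aux (n:ℝ) ‖x‖ hn2 (norm_nonneg x) (by linarith)
      have hWn : (1 - ‖x‖ ^ 2) ^ n = (1 - ‖x‖ ^ 2) ^ (n - 1) * (1 - ‖x‖ ^ 2) := by
        rw [← pow_succ]; congr 1; omega
      have hfac : (0:ℝ) ≤ a * |u x| ^ n / (1 - ‖x‖ ^ 2) ^ n := by positivity
      have hkey2 := mul_le_mul_of_nonneg_left hpoly hfac
      have eL : c ^ n * (|u x| ^ n / (1 - ‖x‖ ^ 2) ^ n)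
          + ((n:ℝ) - 1) * c ^ n * (‖x‖ * |u x| ^ n / (1 - ‖x‖ ^ 2) ^ n)
          = (a * |u x| ^ n / (1 - ‖x‖ ^ 2) ^ n)
              * (2 * ((n:ℝ) - 1) / n * (1 + ((n:ℝ) - 1) * ‖x‖)) := by
        rw [hacn, hcdef]
        ring
      have eR : |u x| ^ n * (2 * a * ((n:ℝ) - 1) * ‖x‖ ^ 2 / (1 - ‖x‖ ^ 2) ^ n
            + n * a / (1 - ‖x‖ ^ 2) ^ (n - 1))
          = (a * |u x| ^ n / (1 - ‖x‖ ^ 2) ^ n) * ((n:ℝ) + ((n:ℝ) - 2) * ‖x‖ ^ 2) := by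
        rw [hWn]
        have hW1 : (1 - ‖x‖ ^ 2) ^ (n - 1) ≠ 0 := pow_ne_zero _ (ne_of_gt hW)
        field_simp
        ring
      rw [eL, eR]
      exact hkey2
    · rw [hu0 x hx, abs_zero, zero_pow hn0]
      simp
  -- pointwise bound P2 (Young's inequality)
  have hP2 : ∀ x : EuclideanSpace ℝ (Fin n),
      - ((a * χ x / (1 - ‖x‖ ^ 2) ^ (n - 1)) * fderiv ℝ (fun y => |u y| ^ n) x x)
      ≤ ((n:ℝ) - 1) * c ^ n * (‖x‖ * |u x| ^ n / (1 - ‖x‖ ^ 2) ^ n)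
          + ‖fderiv ℝ u x‖ ^ n := by
    intro x
    rw [hfv x]
    simp only [ContinuousLinearMap.coe_smul', Pi.smul_apply, smul_eq_mul]
    by_cases hx : x ∈ tsupport u
    · have hr1 : ‖x‖ ≤ ρ := hKρ x hx
      have hrlt : ‖x‖ < 1 := hKball x hx
      have hW : 0 < 1 - ‖x‖ ^ 2 := by nlinarith [norm_nonneg x]
      have hχx : χ x = 1 := hχ1 x (by linarith)
      rw [hχx, mul_one]
      have hWn1 : (0:ℝ) < (1 - ‖x‖ ^ 2) ^ (n - 1) := pow_pos hW _
      have hA0 : (0:ℝ) ≤ a / (1 - ‖x‖ ^ 2) ^ (n - 1) := by positivity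
      have hB' : |fderiv ℝ u x x| ≤ ‖fderiv ℝ u x‖ * ‖x‖ := (fderiv ℝ u x).le_opNorm x
      have hP0 : (0:ℝ) ≤ c * |u x| / (1 - ‖x‖ ^ 2) := by positivity
      have hyoung := young_aux n (by omega) (c * |u x| / (1 - ‖x‖ ^ 2)) ‖fderiv ℝ u x‖
        hP0 (norm_nonneg _)
      have habs1 : |u x| * |u x| ^ (n - 2) = |u x| ^ (n - 1) := by
        rw [← pow_succ']; congr 1; omega
      have hPn1 : (c * |u x| / (1 - ‖x‖ ^ 2)) ^ (n - 1)
          = a * |u x| ^ (n - 1) / (1 - ‖x‖ ^ 2) ^ (n - 1) := by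
        rw [div_pow, mul_pow, hadef]
      have hPn : (c * |u x| / (1 - ‖x‖ ^ 2)) ^ n
          = c ^ n * |u x| ^ n / (1 - ‖x‖ ^ 2) ^ n := by
        rw [div_pow, mul_pow]
      have key1 : -(a / (1 - ‖x‖ ^ 2) ^ (n - 1)
            * ((n:ℝ) * u x * |u x| ^ (n - 2) * fderiv ℝ u x x))
          ≤ a / (1 - ‖x‖ ^ 2) ^ (n - 1)
            * ((n:ℝ) * |u x| ^ (n - 1) * (‖fderiv ℝ u x‖ * ‖x‖)) := by
        have habs : |(n:ℝ) * u x * |u x| ^ (n - 2) * fderiv ℝ u x x|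
            ≤ (n:ℝ) * |u x| ^ (n - 1) * (‖fderiv ℝ u x‖ * ‖x‖) := by
          rw [abs_mul, abs_mul, abs_mul, Nat.abs_cast,
            abs_of_nonneg (pow_nonneg (abs_nonneg (u x)) (n - 2))]
          calc (n:ℝ) * |u x| * |u x| ^ (n - 2) * |fderiv ℝ u x x|
              = ((n:ℝ) * |u x| ^ (n - 1)) * |fderiv ℝ u x x| := by rw [mul_assoc _ _ (|u x| ^ (n-2)), habs1]
            _ ≤ ((n:ℝ) * |u x| ^ (n - 1)) * (‖fderiv ℝ u x‖ * ‖x‖) := by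
                apply mul_le_mul_of_nonneg_left hB'
                positivity
        have h2 : -((n:ℝ) * u x * |u x| ^ (n - 2) * fderiv ℝ u x x)
            ≤ (n:ℝ) * |u x| ^ (n - 1) * (‖fderiv ℝ u x‖ * ‖x‖) :=
          (neg_le_abs _).trans habs
        calc -(a / (1 - ‖x‖ ^ 2) ^ (n - 1)
              * ((n:ℝ) * u x * |u x| ^ (n - 2) * fderiv ℝ u x x))
            = a / (1 - ‖x‖ ^ 2) ^ (n - 1)
              * (-((n:ℝ) * u x * |u x| ^ (n - 2) * fderiv ℝ u x x)) := by ring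
          _ ≤ _ := mul_le_mul_of_nonneg_left h2 hA0
      have key2 : a / (1 - ‖x‖ ^ 2) ^ (n - 1)
            * ((n:ℝ) * |u x| ^ (n - 1) * (‖fderiv ℝ u x‖ * ‖x‖))
          = ‖x‖ * ((n:ℝ) * (c * |u x| / (1 - ‖x‖ ^ 2)) ^ (n - 1) * ‖fderiv ℝ u x‖) := by
        rw [hPn1]
        ring
      have key3 : ‖x‖ * ((n:ℝ) * (c * |u x| / (1 - ‖x‖ ^ 2)) ^ (n - 1) * ‖fderiv ℝ u x‖)
          ≤ ‖x‖ * (((n:ℝ) - 1) * (c * |u x| / (1 - ‖x‖ ^ 2)) ^ n + ‖fderiv ℝ u x‖ ^ n) :=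
        mul_le_mul_of_nonneg_left hyoung (norm_nonneg x)
      have key4 : ‖x‖ * (((n:ℝ) - 1) * (c * |u x| / (1 - ‖x‖ ^ 2)) ^ n + ‖fderiv ℝ u x‖ ^ n)
          ≤ ((n:ℝ) - 1) * c ^ n * (‖x‖ * |u x| ^ n / (1 - ‖x‖ ^ 2) ^ n)
            + ‖fderiv ℝ u x‖ ^ n := by
        rw [hPn]
        have h5 : ‖x‖ * ‖fderiv ℝ u x‖ ^ n ≤ ‖fderiv ℝ u x‖ ^ n := by
          nlinarith [pow_nonneg (norm_nonneg (fderiv ℝ u x)) n, norm_nonneg x]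
        have h6 : ‖x‖ * (((n:ℝ) - 1) * (c ^ n * |u x| ^ n / (1 - ‖x‖ ^ 2) ^ n))
            = ((n:ℝ) - 1) * c ^ n * (‖x‖ * |u x| ^ n / (1 - ‖x‖ ^ 2) ^ n) := by ring
        nlinarith [h5, h6]
      linarith [key1, key2 ▸ key1, key3, key4]
    · rw [hdu0 x hx, hu0 x hx]
      simp [zero_pow hn0]
  -- remaining integrability
  have int4 : Integrable (fun x : EuclideanSpace ℝ (Fin n) =>
      |u x| ^ n * (∑ i, fderiv ℝ (fun y : EuclideanSpace ℝ (Fin n) =>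
        a * χ y / (1 - ‖y‖ ^ 2) ^ (n - 1) * y i) x (EuclideanSpace.single i 1))) := by
    apply Continuous.integrable_of_hasCompactSupport
      (hvcont.mul (continuous_finset_sum univ fun i _ => hdgcont i))
    apply hCSupp
    intro x hx
    show |u x| ^ n * _ = 0
    rw [hu0 x hx, abs_zero, zero_pow hn0, zero_mul]
  have int5 : Integrable (fun x : EuclideanSpace ℝ (Fin n) =>
      (a * χ x / (1 - ‖x‖ ^ 2) ^ (n - 1)) * fderiv ℝ (fun y => |u y| ^ n) x x) := by
    apply Continuous.integrable_of_hasCompactSupport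
    · have heq : (fun x : EuclideanSpace ℝ (Fin n) => fderiv ℝ (fun y => |u y| ^ n) x x)
          = fun x => ((n:ℝ) * u x * |u x| ^ (n - 2)) * (fderiv ℝ u x x) :=
        funext fun x => by rw [hfv x]; simp
      exact hscont.mul (by rw [heq]; exact hfvcont.mul (hducont.clm_apply continuous_id))
    · apply hCSupp
      intro x hx
      rw [hfv x, hdu0 x hx]
      simp
  have hintP2 : Integrable (fun x : EuclideanSpace ℝ (Fin n) =>
      ((n:ℝ) - 1) * c ^ n * (‖x‖ * |u x| ^ n / (1 - ‖x‖ ^ 2) ^ n)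
        + ‖fderiv ℝ u x‖ ^ n) := (int2.const_mul _).add int3
  -- assembly
  have hA : ∫ x : EuclideanSpace ℝ (Fin n),
      (c ^ n * (|u x| ^ n / (1 - ‖x‖ ^ 2) ^ n)
        + ((n:ℝ) - 1) * c ^ n * (‖x‖ * |u x| ^ n / (1 - ‖x‖ ^ 2) ^ n))
      ≤ ∫ x : EuclideanSpace ℝ (Fin n),
        |u x| ^ n * (∑ i, fderiv ℝ (fun y : EuclideanSpace ℝ (Fin n) =>
          a * χ y / (1 - ‖y‖ ^ 2) ^ (n - 1) * y i) x (EuclideanSpace.single i 1)) :=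
    integral_mono ((int1.const_mul (c ^ n)).add
      (int2.const_mul (((n:ℝ) - 1) * c ^ n))) int4 hP1
  have hB : ∫ x : EuclideanSpace ℝ (Fin n),
      (- ((a * χ x / (1 - ‖x‖ ^ 2) ^ (n - 1)) * fderiv ℝ (fun y => |u y| ^ n) x x))
      ≤ ∫ x : EuclideanSpace ℝ (Fin n),
        (((n:ℝ) - 1) * c ^ n * (‖x‖ * |u x| ^ n / (1 - ‖x‖ ^ 2) ^ n)
          + ‖fderiv ℝ u x‖ ^ n) :=
    integral_mono int5.neg hintP2 hP2
  rw [integral_add (int1.const_mul _) (int2.const_mul _), integral_const_mul,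
    integral_const_mul] at hA
  rw [integral_neg, integral_add (int2.const_mul _) int3, integral_const_mul] at hB
  rw [hkey] at hA
  have hfinal : c ^ n * ∫ x : EuclideanSpace ℝ (Fin n), |u x| ^ n / (1 - ‖x‖ ^ 2) ^ n
      ≤ ∫ x : EuclideanSpace ℝ (Fin n), ‖fderiv ℝ u x‖ ^ n := by linarith
  -- identify set integrals with full-space integrals
  have hb3 : ∫ x in ball (0 : EuclideanSpace ℝ (Fin n)) 1, ‖fderiv ℝ u x‖ ^ n
      = ∫ x : EuclideanSpace ℝ (Fin n), ‖fderiv ℝ u x‖ ^ n := by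
    apply setIntegral_eq_integral_of_forall_compl_eq_zero
    intro x hx
    rw [hdu0 x (fun hK => hx (hsupp' hK)), norm_zero, zero_pow hn0]
  have hb1 : ∫ x in ball (0 : EuclideanSpace ℝ (Fin n)) 1, |u x| ^ n / (1 - ‖x‖ ^ 2) ^ n
      = ∫ x : EuclideanSpace ℝ (Fin n), |u x| ^ n / (1 - ‖x‖ ^ 2) ^ n := by
    apply setIntegral_eq_integral_of_forall_compl_eq_zero
    intro x hx
    rw [hu0 x (fun hK => hx (hsupp' hK)), abs_zero, zero_pow hn0, zero_div]
  rw [ge_iff_le, hb3, hb1]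
  exact hfinal
end

section
/- Let n ≥ 2 and set ψ(x) = (-ln |x|)^{(n-1)/n} for x in the punctured unit ball of ℝⁿ. Then ψ is a smooth positive supersolution of the equation -Δ_n ψ = V ψ^{n-1} in 𝔹ⁿ \ {0}, where V(x) = (2(n-1)/n)^n (1-|x|²)^{-n}; namely, -Δ_n ψ(x) - V(x) ψ(x)^{n-1} = ((n-1)/n)^n (ψ(x)^{n-1}/|x|^n) ( (-ln |x|)^{-n} - (2|x|/(1-|x|²))^n ) > 0 for all x ∈ 𝔹ⁿ with 0 < |x| < 1. -/
open MeasureTheory Metric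

/-- The `n`-Laplacian `Δ_n ψ = div(|∇ψ|^{n-2} ∇ψ)` on Euclidean space. -/
noncomputable def nLaplacian (n : ℕ) (ψ : EuclideanSpace ℝ (Fin n) → ℝ)
    (x : EuclideanSpace ℝ (Fin n)) : ℝ :=
  ∑ i : Fin n,
    fderiv ℝ (fun y => ‖gradient ψ y‖ ^ (n - 2) * gradient ψ y i) x
      (EuclideanSpace.single i 1)

open Real Filter Topology Set

/-!
For a radial function `ψ y = f ‖y‖` the field `|∇ψ|^{n-2} ∇ψ` is `G(r) r^{-n} y`, where
`G(r) = r^{n-1} |f'(r)|^{n-2} f'(r)` is its flux through the sphere of radius `r`, and the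
divergence of such a field is `G'(r) / r^{n-1}`. For `f r = (-log r)^α` with `α = (n-1)/n` the
flux is `-α^{n-1} (-log r)^{-α}`, so `-Δ_n ψ = α^n (-log r)^{-α-1} / r^n` and the identity is
algebra. Positivity reduces to `2 r (-log r) < 1 - r^2`, which is `t < sinh t` at `t = -log r`.
-/

section InnerProductSpace

variable {F : Type*} [NormedAddCommGroup F] [InnerProductSpace ℝ F] {x : F}

theorem hasFDerivAt_norm_of_ne_zero (hx : x ≠ 0) :
    HasFDerivAt (fun y : F => ‖y‖) (‖x‖⁻¹ • innerSL ℝ x) x := by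
  have h := (hasStrictFDerivAt_norm_sq x).hasFDerivAt.sqrt (by simpa using hx)
  simp only [sqrt_sq (norm_nonneg _)] at h
  convert h using 1
  ext v
  simp only [smul_apply, coe_innerSL_apply, smul_eq_mul, one_div, mul_inv_rev, nsmul_eq_mul,
    Nat.cast_ofNat]
  field_simp

theorem HasDerivAt.hasGradientAt_comp_norm [CompleteSpace F] {f : ℝ → ℝ} {f' : ℝ}
    (hf : HasDerivAt f f' ‖x‖) (hx : x ≠ 0) :
    HasGradientAt (fun y => f ‖y‖) ((f' / ‖x‖) • x) x := by
  rw [hasGradientAt_iff_hasFDerivAt]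
  refine (hf.comp_hasFDerivAt x (hasFDerivAt_norm_of_ne_zero hx)).congr_fderiv ?_
  ext v
  simp only [smul_apply, coe_innerSL_apply, smul_eq_mul, map_smul,
    InnerProductSpace.toDual_apply_apply]
  ring

end InnerProductSpace

variable {n : ℕ} {x : EuclideanSpace ℝ (Fin n)}

theorem sum_fderiv_comp_norm_mul_apply {g : ℝ → ℝ} {g' : ℝ} (hg : HasDerivAt g g' ‖x‖)
    (hx : x ≠ 0) :
    ∑ i, fderiv ℝ (fun y => g ‖y‖ * y i) x (EuclideanSpace.single i 1)
      = n * g ‖x‖ + ‖x‖ * g' := by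
  have hcoord (i : Fin n) : fderiv ℝ (fun y => g ‖y‖ * y i) x (EuclideanSpace.single i 1)
      = g ‖x‖ + g' / ‖x‖ * x i ^ 2 := by
    have : HasFDerivAt (fun y => g ‖y‖ * y i) _ x :=
      (hg.comp_hasFDerivAt x (hasFDerivAt_norm_of_ne_zero hx)).mul
        (EuclideanSpace.proj (𝕜 := ℝ) i).hasFDerivAt
    rw [this.fderiv]
    simp only [Function.comp_apply, add_apply, smul_apply, PiLp.proj_apply, PiLp.single_eq_same,
      smul_eq_mul, mul_one, coe_innerSL_apply, EuclideanSpace.inner_single_right, ringHom_apply,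
      one_mul, add_right_inj]
    ring
  have hsq : ∑ i, x i ^ 2 = ‖x‖ ^ 2 := by
    rw [EuclideanSpace.norm_sq_eq]; simp
  rw [Finset.sum_congr rfl fun i _ => hcoord i, Finset.sum_add_distrib, ← Finset.mul_sum, hsq]
  have : ‖x‖ ≠ 0 := norm_ne_zero_iff.2 hx
  simp only [Finset.sum_const, Finset.card_univ, Fintype.card_fin, nsmul_eq_mul, add_right_inj]
  field_simp

theorem nLaplacian_comp_norm {f f' G : ℝ → ℝ} {G' : ℝ} (hx : x ≠ 0)
    (hf : ∀ᶠ s in 𝓝 ‖x‖, HasDerivAt f (f' s) s)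
    (hG : ∀ᶠ s in 𝓝 ‖x‖, s ^ (n - 1) * (|f' s| ^ (n - 2) * f' s) = G s)
    (hG' : HasDerivAt G G' ‖x‖) :
    nLaplacian n (fun y => f ‖y‖) x = G' / ‖x‖ ^ (n - 1) := by
  have hn : n ≠ 0 := by
    rintro rfl
    exact hx (Subsingleton.elim _ _)
  have hr : ‖x‖ ≠ 0 := norm_ne_zero_iff.2 hx
  have hflux (i : Fin n) : (fun y => ‖gradient (fun z => f ‖z‖) y‖ ^ (n - 2) *
      gradient (fun z => f ‖z‖) y i) =ᶠ[𝓝 x] fun y => G ‖y‖ / ‖y‖ ^ n * y i := by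
    filter_upwards [(continuous_norm.tendsto x).eventually
      (hf.and (hG.and (eventually_ne_nhds hr)))] with y ⟨hfy, hGy, hy⟩
    rw [(hfy.hasGradientAt_comp_norm (norm_ne_zero_iff.1 hy)).gradient, ← hGy,
      ← pow_sub_one_mul hn]
    simp only [norm_smul, norm_div, norm_eq_abs, abs_norm, PiLp.smul_apply, smul_eq_mul]
    field_simp
  have hg : HasDerivAt (fun s => G s / s ^ n) _ ‖x‖ :=
    hG'.div (hasDerivAt_pow n ‖x‖) (pow_ne_zero n hr)
  rw [nLaplacian, Finset.sum_congr rfl fun i _ => by rw [(hflux i).fderiv_eq],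
    sum_fderiv_comp_norm_mul_apply hg hx, ← pow_sub_one_mul hn]
  field_simp
  ring

theorem hasDerivAt_neg_log_rpow (α : ℝ) {s : ℝ} (hs0 : 0 < s) (hs1 : s < 1) :
    HasDerivAt (fun t => (-log t) ^ α) (-(α * (-log s) ^ (α - 1) / s)) s := by
  have hL : -log s ≠ 0 := (neg_pos.2 (log_neg hs0 hs1)).ne'
  exact ((hasDerivAt_log hs0.ne').neg.rpow_const (f := fun t => -log t) (p := α)
    (Or.inl hL)).congr_deriv (by ring)

theorem nLaplacian_neg_log_norm_rpow (hn : 2 ≤ n) {α : ℝ} (hα : 0 < α) (hx0 : 0 < ‖x‖)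
    (hx1 : ‖x‖ < 1) :
    nLaplacian n (fun y => (-log ‖y‖) ^ α) x
      = α ^ (n - 1) * ((α - 1) * (n - 1)) * (-log ‖x‖) ^ ((α - 1) * (n - 1) - 1) / ‖x‖ ^ n := by
  have hG : ∀ s ∈ Ioo (0 : ℝ) 1, s ^ (n - 1) * (|-(α * (-log s) ^ (α - 1) / s)| ^ (n - 2) *
      -(α * (-log s) ^ (α - 1) / s)) = -(α ^ (n - 1) * (-log s) ^ ((α - 1) * (n - 1))) := by
    rintro s ⟨hs0, hs1⟩
    have hL : 0 < -log s := neg_pos.2 (log_neg hs0 hs1)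
    rw [abs_neg, abs_of_pos (by positivity), mul_neg, ← pow_succ,
      show n - 2 + 1 = n - 1 by omega, mul_neg, ← mul_pow, mul_div_cancel₀ _ hs0.ne', mul_pow,
      ← Nat.cast_pred (by omega), rpow_mul_natCast hL.le]
  have hG' := ((hasDerivAt_neg_log_rpow ((α - 1) * (n - 1)) hx0 hx1).const_mul (α ^ (n - 1))).neg
  have hf : ∀ s ∈ Ioo (0 : ℝ) 1, HasDerivAt (fun t => (-log t) ^ α)
      (-(α * (-log s) ^ (α - 1) / s)) s := fun s ⟨hs0, hs1⟩ => hasDerivAt_neg_log_rpow α hs0 hs1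
  rw [nLaplacian_comp_norm (norm_pos_iff.1 hx0) (eventually_of_mem (Ioo_mem_nhds hx0 hx1) hf)
    (eventually_of_mem (Ioo_mem_nhds hx0 hx1) hG) hG', ← pow_sub_one_mul (by omega : n ≠ 0)]
  field_simp

theorem two_mul_mul_neg_log_lt_one_sub_sq {r : ℝ} (h0 : 0 < r) (h1 : r < 1) :
    2 * r * -log r < 1 - r ^ 2 := by
  have h := self_lt_sinh_iff.2 (neg_pos.2 (log_neg h0 h1))
  rw [sinh_neg, sinh_log h0] at h
  calc 2 * r * -log r < 2 * r * -((r - r⁻¹) / 2) := by gcongr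
    _ = 1 - r ^ 2 := by field_simp; ring

theorem two_mul_div_one_sub_sq_pow_lt {r : ℝ} (h0 : 0 < r) (h1 : r < 1) {n : ℕ} (hn : n ≠ 0) :
    (2 * r / (1 - r ^ 2)) ^ n < 1 / (-log r) ^ n := by
  have hL : 0 < -log r := neg_pos.2 (log_neg h0 h1)
  have hq : 0 < 1 - r ^ 2 := by nlinarith
  rw [← one_div_pow]
  refine pow_lt_pow_left₀ ?_ (by positivity) hn
  rw [div_lt_div_iff₀ hq hL]
  linarith [two_mul_mul_neg_log_lt_one_sub_sq h0 h1]

theorem neg_nLaplacian_sub_potential_eq (hn : 1 ≤ n) {r L : ℝ} (hr0 : 0 < r) (hr1 : r < 1)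
    (hL : 0 < L) :
    -((((n : ℝ) - 1) / n) ^ (n - 1) * ((((n : ℝ) - 1) / n - 1) * (n - 1)) *
          L ^ ((((n : ℝ) - 1) / n - 1) * (n - 1) - 1) / r ^ n)
        - (2 * ((n : ℝ) - 1) / n) ^ n * (1 - r ^ 2) ^ (-(n : ℝ)) *
            (L ^ (((n : ℝ) - 1) / n)) ^ (n - 1)
      = (((n : ℝ) - 1) / n) ^ n * ((L ^ (((n : ℝ) - 1) / n)) ^ (n - 1) / r ^ n) *
          (1 / L ^ n - (2 * r / (1 - r ^ 2)) ^ n) := by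
  have hn0 : (n : ℝ) ≠ 0 := by positivity
  have hq : 0 < 1 - r ^ 2 := by nlinarith
  have hβ : (((n : ℝ) - 1) / n - 1) * (n - 1) = -(((n : ℝ) - 1) / n) := by field_simp; ring
  have hexp : -(((n : ℝ) - 1) / n) - 1 = ((n : ℝ) - 1) / n * (n - 1 : ℕ) - n := by
    rw [Nat.cast_pred (by omega)]; field_simp; ring
  rw [hβ, hexp, show 2 * ((n : ℝ) - 1) / n = 2 * (((n : ℝ) - 1) / n) by ring]
  generalize ((n : ℝ) - 1) / n = α
  rw [rpow_sub_natCast hL.ne', rpow_mul_natCast hL.le, rpow_neg_natCast, zpow_neg, zpow_natCast,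
    mul_pow, div_pow, ← mul_pow_sub_one (by omega : n ≠ 0) α]
  field_simp
  ring

theorem stmt_5 (n : ℕ) (hn : 2 ≤ n) :
    ∀ x : EuclideanSpace ℝ (Fin n), 0 < ‖x‖ → ‖x‖ < 1 →
      (-nLaplacian n (fun y => (-Real.log ‖y‖) ^ (((n : ℝ) - 1) / n)) x
          - (2 * ((n : ℝ) - 1) / n) ^ n * (1 - ‖x‖ ^ 2) ^ (-(n : ℝ)) *
              ((-Real.log ‖x‖) ^ (((n : ℝ) - 1) / n)) ^ (n - 1)
        = (((n : ℝ) - 1) / n) ^ n *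
            (((-Real.log ‖x‖) ^ (((n : ℝ) - 1) / n)) ^ (n - 1) / ‖x‖ ^ n) *
            (1 / (-Real.log ‖x‖) ^ n - (2 * ‖x‖ / (1 - ‖x‖ ^ 2)) ^ n)) ∧
      0 < -nLaplacian n (fun y => (-Real.log ‖y‖) ^ (((n : ℝ) - 1) / n)) x
            - (2 * ((n : ℝ) - 1) / n) ^ n * (1 - ‖x‖ ^ 2) ^ (-(n : ℝ)) *
                ((-Real.log ‖x‖) ^ (((n : ℝ) - 1) / n)) ^ (n - 1) := by
  intro x hx0 hx1
  have hα : 0 < ((n : ℝ) - 1) / n := by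
    have : (2 : ℝ) ≤ n := by exact_mod_cast hn
    exact div_pos (by linarith) (by linarith)
  have hL : 0 < -log ‖x‖ := neg_pos.2 (log_neg hx0 hx1)
  have hdefect := neg_nLaplacian_sub_potential_eq (one_le_two.trans hn) hx0 hx1 hL
  rw [← nLaplacian_neg_log_norm_rpow hn hα hx0 hx1] at hdefect
  refine ⟨hdefect, hdefect ▸ mul_pos (by positivity) (sub_pos.2 ?_)⟩
  exact two_mul_div_one_sub_sq_pow_lt hx0 hx1 (by omega)
end
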